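/- The polynomial p(x,y) = y + x²y² has no real Jacobian mate: for every q ∈ ℝ[x,y] there is a point v ∈ ℝ² where the Jacobian determinant of (p,q) vanishes. -/

import Mathlib

open MvPolynomial

/-- The Jacobian determinant of the polynomial map `(p, q) : ℝ² → ℝ²`. -/
noncomputable def Jac (p q : MvPolynomial (Fin 2) ℝ) (v : Fin 2 → ℝ) : ℝ :=
  eval v (pderiv 0 p * pderiv 1 q - pderiv 1 p * pderiv 0 q)

/-!
Along a curve tangent to the Hamiltonian field `(-∂p/∂y, ∂p/∂x)` of `p = y + x²y²`, a polynomial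
`q` changes at the rate `Jac p q`; since `Jac p q` has constant sign when it never vanishes, we may
assume it is positive, so `q` increases along every level curve of `p`. On the x-axis this makes
`x ↦ q(x, 0)` strictly decreasing. The points `(x, y)` and `(x, -1/x² - y)` lie on one level curve
of `p`, which the coordinate `s = xy` parametrises; letting `y → 0⁻` gives
`q(x, -1/x²) ≤ q(x, 0)`, and `q` increases along the branch `y = -1/x²` of `p = 0`. So `q(x, 0)` is
bounded on `[1, ∞)`, hence the polynomial `x ↦ q(x, 0)` is constant, a contradiction.
-/

open Filter Set

namespace MvPolynomial

theorem hasDerivAt_eval_comp {σ : Type*} [Fintype σ] (r : MvPolynomial σ ℝ) {γ : ℝ → σ → ℝ}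
    {γ' : σ → ℝ} {t : ℝ} (hγ : HasDerivAt γ γ' t) :
    HasDerivAt (fun s => eval (γ s) r) (∑ i, γ' i * eval (γ t) (pderiv i r)) t := by
  classical
  induction r using MvPolynomial.induction_on with
  | C a => simpa using hasDerivAt_const t a
  | add p q hp hq => simpa [mul_add, Finset.sum_add_distrib] using hp.fun_add hq
  | mul_X p i hp =>
    simp only [eval_mul, eval_X]
    refine (hp.fun_mul (hasDerivAt_pi.1 hγ i)).congr_deriv ?_
    simp [pderiv_X, Pi.single_apply, apply_ite (eval _), mul_add, Finset.sum_add_distrib,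
      Finset.mul_sum, mul_comm, mul_left_comm, add_comm]

end MvPolynomial

theorem Jac_neg (p q : MvPolynomial (Fin 2) ℝ) (v : Fin 2 → ℝ) : Jac p (-q) v = -Jac p q v := by
  simp only [Jac, map_neg, mul_neg, sub_neg_eq_add, eval_add, eval_sub, eval_mul]
  ring

theorem forall_Jac_pos_or_forall_Jac_neg_pos {p q : MvPolynomial (Fin 2) ℝ}
    (h : ∀ v, Jac p q v ≠ 0) : (∀ v, 0 < Jac p q v) ∨ ∀ v, 0 < Jac p (-q) v := by
  by_contra! ⟨⟨v, hv⟩, ⟨w, hw⟩⟩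
  rw [Jac_neg, neg_nonpos] at hw
  obtain ⟨u, -, hu⟩ := isPreconnected_univ.intermediate_value (mem_univ v) (mem_univ w)
    (continuous_eval _).continuousOn ⟨hv, hw⟩
  exact h u hu

theorem hasDerivAt_eval_of_hamiltonian (p q : MvPolynomial (Fin 2) ℝ) {a b : ℝ → ℝ} {μ t : ℝ}
    (ha : HasDerivAt a (-μ * eval ![a t, b t] (pderiv 1 p)) t)
    (hb : HasDerivAt b (μ * eval ![a t, b t] (pderiv 0 p)) t) :
    HasDerivAt (fun s => eval ![a s, b s] q) (μ * Jac p q ![a t, b t]) t := by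
  have hγ : HasDerivAt (fun s => ![a s, b s]) ![_, _] t :=
    hasDerivAt_pi.2 (Fin.forall_fin_two.2 ⟨ha, hb⟩)
  refine (q.hasDerivAt_eval_comp hγ).congr_deriv ?_
  simp only [Fin.sum_univ_two, Jac, eval_sub, eval_mul, Matrix.cons_val_zero, Matrix.cons_val_one]
  ring

local notation "p₀" => (X 1 + X 0 ^ 2 * X 1 ^ 2 : MvPolynomial (Fin 2) ℝ)

theorem eval_pderiv_zero_p₀ (x y : ℝ) : eval ![x, y] (pderiv 0 p₀) = 2 * x * y ^ 2 := by
  simp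
  ring

theorem eval_pderiv_one_p₀ (x y : ℝ) : eval ![x, y] (pderiv 1 p₀) = 1 + 2 * x ^ 2 * y := by
  simp
  ring

theorem strictAnti_eval_xAxis {q : MvPolynomial (Fin 2) ℝ} (hq : ∀ v, 0 < Jac p₀ q v) :
    StrictAnti fun x => eval ![x, 0] q := by
  refine strictAnti_of_hasDerivAt_neg (fun x => ?_) (fun x => neg_neg_of_pos (hq ![x, 0]))
  simpa using hasDerivAt_eval_of_hamiltonian p₀ q (μ := -1)
    (by simpa [eval_pderiv_one_p₀] using hasDerivAt_id' x)
    (by simpa [eval_pderiv_zero_p₀] using hasDerivAt_const x (0 : ℝ))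

-- In the coordinate `s = x * y`, the equation `y + x²y² = c` reads `y = c - s²`.
noncomputable def levelCurve (c s : ℝ) : Fin 2 → ℝ := ![s / (c - s ^ 2), c - s ^ 2]

theorem levelCurve_mul {x y : ℝ} (hy : y ≠ 0) :
    levelCurve (y + x ^ 2 * y ^ 2) (x * y) = ![x, y] := by
  have hc : y + x ^ 2 * y ^ 2 - (x * y) ^ 2 = y := by ring
  simp only [levelCurve, hc, mul_div_cancel_right₀ x hy]

theorem levelCurve_zero {x : ℝ} (hx : x ≠ 0) : levelCurve 0 (-x⁻¹) = ![x, -1 / x ^ 2] := by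
  simp only [levelCurve]
  congr 2 <;> field_simp <;> ring

theorem hasDerivAt_eval_levelCurve (q : MvPolynomial (Fin 2) ℝ) {c s : ℝ} (hcs : c < s ^ 2) :
    HasDerivAt (fun s => eval (levelCurve c s) q)
      ((s ^ 2 - c)⁻¹ * Jac p₀ q (levelCurve c s)) s := by
  have hne : c - s ^ 2 ≠ 0 := by linarith
  have hne' : s ^ 2 - c ≠ 0 := by linarith
  have hy : HasDerivAt (fun s : ℝ => c - s ^ 2) (-(2 * s)) s := by
    simpa using (hasDerivAt_pow 2 s).const_sub c
  refine hasDerivAt_eval_of_hamiltonian p₀ q ?_ ?_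
  · refine ((hasDerivAt_id' s).div hy hne).congr_deriv ?_
    rw [eval_pderiv_one_p₀]
    field_simp
    ring
  · refine hy.congr_deriv ?_
    rw [eval_pderiv_zero_p₀]
    field_simp
    ring

theorem strictMonoOn_eval_levelCurve {q : MvPolynomial (Fin 2) ℝ} (hq : ∀ v, 0 < Jac p₀ q v)
    {c : ℝ} (hc : c ≤ 0) : StrictMonoOn (fun s => eval (levelCurve c s) q) (Iio 0) := by
  have hcs : ∀ s ∈ Iio (0 : ℝ), c < s ^ 2 := fun s hs => by nlinarith [mem_Iio.1 hs]
  refine strictMonoOn_of_hasDerivWithinAt_pos (convex_Iio 0)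
    (fun s hs => (hasDerivAt_eval_levelCurve q (hcs s hs)).continuousAt.continuousWithinAt)
    (fun s hs => (hasDerivAt_eval_levelCurve q (hcs s (interior_subset hs))).hasDerivWithinAt)
    (fun s hs => mul_pos (inv_pos.2 (sub_pos.2 (hcs s (interior_subset hs)))) (hq _))

-- Both points lie on the level curve of `p₀` through `(x, y)`, at parameters `x(-1/x² - y) < xy`.
theorem eval_reflect_lt_eval {q : MvPolynomial (Fin 2) ℝ} (hq : ∀ v, 0 < Jac p₀ q v)
    {x y : ℝ} (hx : 0 < x) (hy : y ∈ Ioo (-1 / (2 * x ^ 2)) 0) :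
    eval ![x, -1 / x ^ 2 - y] q < eval ![x, y] q := by
  obtain ⟨hy₁, hy₂⟩ := hy
  rw [div_lt_iff₀ (by positivity)] at hy₁
  have hlow : -1 / x ^ 2 - y < y := by
    rw [sub_lt_iff_lt_add, div_lt_iff₀ (by positivity)]
    linarith
  have hlevel : -1 / x ^ 2 - y + x ^ 2 * (-1 / x ^ 2 - y) ^ 2 = y + x ^ 2 * y ^ 2 := by
    field_simp
    ring
  have hc : y + x ^ 2 * y ^ 2 ≤ 0 := by nlinarith
  rw [← levelCurve_mul (x := x) (hlow.trans hy₂).ne, ← levelCurve_mul (x := x) hy₂.ne, hlevel]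
  exact strictMonoOn_eval_levelCurve hq hc (mul_neg_of_pos_of_neg hx (hlow.trans hy₂))
    (mul_neg_of_pos_of_neg hx hy₂) (mul_lt_mul_of_pos_left hlow hx)

theorem eval_lowerBranch_le_eval_xAxis {q : MvPolynomial (Fin 2) ℝ} (hq : ∀ v, 0 < Jac p₀ q v)
    {x : ℝ} (hx : 0 < x) : eval ![x, -1 / x ^ 2] q ≤ eval ![x, 0] q := by
  have hcont : Continuous fun y => eval ![x, -1 / x ^ 2 - y] q - eval ![x, y] q :=
    ((continuous_eval q).comp (by fun_prop)).sub ((continuous_eval q).comp (by fun_prop))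
  have hlim := hcont.continuousWithinAt (s := Iio 0) (x := 0)
  rw [ContinuousWithinAt, sub_zero] at hlim
  refine sub_nonpos.1 (le_of_tendsto hlim ?_)
  filter_upwards [Ioo_mem_nhdsLT
    (div_neg_of_neg_of_pos (by norm_num) (by positivity) : -1 / (2 * x ^ 2) < 0)] with y hy
  exact (sub_neg.2 (eval_reflect_lt_eval hq hx hy)).le

theorem eval_lowerBranch_le {q : MvPolynomial (Fin 2) ℝ} (hq : ∀ v, 0 < Jac p₀ q v)
    {a b : ℝ} (ha : 0 < a) (hab : a ≤ b) : eval ![a, -1 / a ^ 2] q ≤ eval ![b, -1 / b ^ 2] q := by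
  have hb := ha.trans_le hab
  rw [← levelCurve_zero ha.ne', ← levelCurve_zero hb.ne']
  exact (strictMonoOn_eval_levelCurve hq le_rfl).monotoneOn (neg_neg_of_pos (inv_pos.2 ha))
    (neg_neg_of_pos (inv_pos.2 hb)) (neg_le_neg (inv_anti₀ ha hab))

theorem eval_xAxis_eq_of_bounded (q : MvPolynomial (Fin 2) ℝ) {a M : ℝ}
    (h : ∀ x ≥ a, |eval ![x, 0] q| ≤ M) (x y : ℝ) : eval ![x, 0] q = eval ![y, 0] q := by
  set P : Polynomial ℝ := aeval ![Polynomial.X, 0] q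
  have hP : ∀ x, P.eval x = eval ![x, 0] q := fun x => by
    have hpt : (fun i => Polynomial.aeval x ((![Polynomial.X, 0] : Fin 2 → Polynomial ℝ) i)) =
        ![x, 0] := by
      funext i
      fin_cases i <;> simp
    rw [← Polynomial.coe_aeval_eq_eval, ← AlgHom.comp_apply, comp_aeval, hpt, aeval_eq_eval]
  have hdeg : P.degree ≤ 0 := (Polynomial.isBoundedUnder_abs_atTop_iff P).1
    ⟨M, eventually_map.2 ((eventually_ge_atTop a).mono fun x hx => (hP x).symm ▸ h x hx)⟩
  rw [← hP, ← hP, Polynomial.eq_C_of_degree_le_zero hdeg, Polynomial.eval_C, Polynomial.eval_C]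

theorem not_forall_Jac_pos (q : MvPolynomial (Fin 2) ℝ) : ¬ ∀ v, 0 < Jac p₀ q v := by
  intro hq
  have hanti := strictAnti_eval_xAxis hq
  have hbounded : ∀ x ≥ 1, |eval ![x, 0] q| ≤ max |eval ![1, -1] q| |eval ![1, 0] q| := by
    intro x hx
    have hlower : eval ![1, -1] q ≤ eval ![x, 0] q := by
      simpa using (eval_lowerBranch_le hq one_pos hx).trans
        (eval_lowerBranch_le_eval_xAxis hq (one_pos.trans_le hx))
    have hupper : eval ![x, 0] q ≤ eval ![1, 0] q := hanti.antitone hx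
    exact abs_le_max_abs_abs hlower hupper
  exact (hanti zero_lt_one).ne' (eval_xAxis_eq_of_bounded q hbounded 0 1)

/-- The polynomial `p(x,y) = y + x²y²` has no real Jacobian mate: for every real
polynomial `q` in two variables the Jacobian determinant of `(p,q)` vanishes somewhere. -/
theorem no_jacobian_mate_y_add_x2y2 :
    ∀ q : MvPolynomial (Fin 2) ℝ,
      ∃ v : Fin 2 → ℝ, Jac (X 1 + X 0 ^ 2 * X 1 ^ 2) q v = 0 := by
  intro q
  by_contra! hJ
  rcases forall_Jac_pos_or_forall_Jac_neg_pos hJ with hq | hq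
  exacts [not_forall_Jac_pos q hq, not_forall_Jac_pos (-q) hq]
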